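/- arXiv:2205.03180 — 2 statements merged into one kernel-verified Lean document; each statement's English description precedes it below -/
import Mathlib

section
/- Let M be a p-matroid and I an independent set of M with |I| = r(M) − 1 and e ∉ cl(I), where e ∈ {a,b}. Then I ∪ {z, γ} is a basis of the es-splitting matroid M^e_{a,b}. -/
open Matrix Set

variable {α : Type*}

/-- The columns of `A` indexed by `S` are linearly independent. -/
def ColIndep {m E F : Type*} [Semiring F] (A : Matrix m E F) (S : Set E) : Prop :=
  LinearIndependent F (fun s : S => Aᵀ s.1)

/-- `M` is the vector matroid of the matrix `A` (ground set all columns). -/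
def IsVectorMatroid {m E F : Type*} [Semiring F] (M : Matroid E) (A : Matrix m E F) : Prop :=
  M.E = Set.univ ∧ ∀ S : Set E, M.Indep S ↔ ColIndep A S

/-- The splitting matrix `A_{a,b}`: `A` with an extra row having `α` in columns `a`, `b`
and `0` elsewhere. -/
def splitMatrix {m E F : Type*} [Zero F] [DecidableEq E] (A : Matrix m E F) (a b : E) (α : F) :
    Matrix (m ⊕ Unit) E F :=
  Matrix.of fun i j =>
    Sum.elim (fun i' => A i' j) (fun _ => if j = a ∨ j = b then α else 0) i

/-- The column `z = (0,…,0,α)ᵀ`. -/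
def zColumn {m F : Type*} [Zero F] (α : F) : m ⊕ Unit → F :=
  Sum.elim (fun _ => 0) (fun _ => α)

/-- The es-splitting matrix `A^e_{a,b}`: the splitting matrix with two extra columns,
`Sum.inr 0 ↦ z = (0,…,0,α)ᵀ` and `Sum.inr 1 ↦ γ = e - z`. -/
def esMatrix {m E F : Type*} [Ring F] [DecidableEq E] (A : Matrix m E F) (a b e : E) (α : F) :
    Matrix (m ⊕ Unit) (E ⊕ Fin 2) F :=
  Matrix.of fun i j =>
    Sum.elim (fun x => splitMatrix A a b α i x)
      (fun k => if k = (0 : Fin 2) then zColumn α i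
                else splitMatrix A a b α i e - zColumn α i) j

/-- A circuit of a matroid: a minimal dependent set. -/
def IsCircuit (M : Matroid α) (C : Set α) : Prop :=
  M.Dep C ∧ ∀ D, D ⊂ C → M.Indep D

/-- The (ℕ-valued) rank of a set in a matroid: the largest size of an independent subset. -/
noncomputable def rk (M : Matroid α) (X : Set α) : ℕ :=
  sSup {n | ∃ I, I ⊆ X ∧ M.Indep I ∧ I.ncard = n}

/-- Every element lies in some circuit. -/
def Coloopless (M : Matroid α) : Prop :=
  ∀ x ∈ M.E, ∃ C, IsCircuit M C ∧ x ∈ C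

/-- A simple matroid: every subset of the ground set with at most two elements is independent. -/
def SimpleMatroid (M : Matroid α) : Prop :=
  ∀ X ⊆ M.E, X.ncard ≤ 2 → M.Indep X

/-- A matroid is connected if every two distinct elements lie in a common circuit. -/
def ConnectedMatroid (M : Matroid α) : Prop :=
  ∀ x ∈ M.E, ∀ y ∈ M.E, x ≠ y → ∃ C, IsCircuit M C ∧ x ∈ C ∧ y ∈ C

/-- A `k`-separation of `M`: a partition `{S, T}` of the ground set with `|S|, |T| ≥ k` and
`r(S) + r(T) - r(M) < k`. -/
def KSeparation (M : Matroid α) (k : ℕ) (S T : Set α) : Prop :=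
  S ∪ T = M.E ∧ Disjoint S T ∧ k ≤ S.ncard ∧ k ≤ T.ncard ∧
    rk M S + rk M T < rk M M.E + k

/-- `M` is `n`-connected: it has no `k`-separation for `1 ≤ k ≤ n - 1`. -/
def NConnected (M : Matroid α) (n : ℕ) : Prop :=
  ∀ k S T, 1 ≤ k → k ≤ n - 1 → ¬ KSeparation M k S T

/-- A matroid is Eulerian if its ground set is a disjoint union of circuits. -/
def Eulerian (M : Matroid α) : Prop :=
  ∃ (n : ℕ) (D : Fin n → Set α), (∀ i, IsCircuit M (D i)) ∧
    (∀ i j, i ≠ j → Disjoint (D i) (D j)) ∧ (⋃ i, D i) = M.E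

/-- `C` carries a linear dependence of the columns of `A` with all coefficients nonzero
exactly on `C`, whose coefficients at `a` and `b` sum to zero. -/
def HasPDependence {m E F : Type*} [Semiring F] [Fintype E] (A : Matrix m E F)
    (a b : E) (C : Set E) : Prop :=
  ∃ c : E → F, (∀ x, x ∈ C ↔ c x ≠ 0) ∧ (∑ x, c x • Aᵀ x) = 0 ∧ c a + c b = 0

/-- A `p`-circuit of the vector matroid `M = M[A]` with respect to `a, b`. -/
def IsPCircuit {m E F : Type*} [Semiring F] [Fintype E] (M : Matroid E) (A : Matrix m E F)
    (a b : E) (C : Set E) : Prop :=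
  IsCircuit M C ∧ a ∈ C ∧ b ∈ C ∧ HasPDependence A a b C

/-- An `np`-circuit: a circuit meeting `{a, b}` that is not a `p`-circuit. -/
def IsNpCircuit {m E F : Type*} [Semiring F] [Fintype E] (M : Matroid E) (A : Matrix m E F)
    (a b : E) (C : Set E) : Prop :=
  IsCircuit M C ∧ (C ∩ {a, b}).Nonempty ∧ ¬ HasPDependence A a b C

variable {m E : Type*} [Fintype m] [Fintype E] [DecidableEq E] {p : ℕ} [Fact p.Prime]

/-! Since `e ∉ cl(I)` and `|I| + 1 = r(M)`, the set `J = I ∪ {e}` is a basis of `M`: its columns are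
independent and span the column space of `A`. Because `e ∈ {a, b}`, the column `γ = e − z` of
`A^e_{a,b}` is `(Aₑ, 0)`. Forgetting the new row therefore maps the columns of `I ∪ {γ}` onto the
independent columns of `J`, while it kills `z = (0, …, 0, α) ≠ 0`; so `I ∪ {z, γ}` is independent.
It is also spanning: `z` spans the new coordinate and, modulo `z`, the columns of `I ∪ {γ}` are
those of `J`, which span the old coordinates. -/

namespace Matroid.Indep

variable {M : Matroid α} {I : Set α}

lemma ncard_le_rk [Finite α] (hI : M.Indep I) : I.ncard ≤ rk M M.E :=
  le_csSup ⟨Nat.card α, by rintro _ ⟨J, -, -, rfl⟩; exact J.ncard_le_card⟩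
    ⟨I, hI.subset_ground, hI, rfl⟩

lemma isBase_of_rk_le_ncard [Finite α] (hI : M.Indep I) (h : rk M M.E ≤ I.ncard) :
    M.IsBase I :=
  hI.isBase_of_forall_insert fun x hx hxI => by
    have := hxI.ncard_le_rk
    rw [ncard_insert_of_notMem hx.2 I.toFinite] at this
    omega

lemma isBase_insert_of_ncard_add_one_eq_rk [Finite α] {e : α} (hI : M.Indep I) (he : e ∈ M.E)
    (hecl : e ∉ M.closure I) (hcard : I.ncard + 1 = rk M M.E) : M.IsBase (insert e I) := by
  have heI : e ∉ I := notMem_of_mem_sdiff_closure ⟨he, hecl⟩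
  refine ((hI.insert_indep_iff_of_notMem heI).2 ⟨he, hecl⟩).isBase_of_rk_le_ncard ?_
  rw [ncard_insert_of_notMem heI I.toFinite, hcard]

end Matroid.Indep

namespace IsVectorMatroid

variable {m E F : Type*} [DivisionRing F] {M : Matroid E} {A : Matrix m E F}

lemma isBase_iff (hM : IsVectorMatroid M A) {B : Set E} :
    M.IsBase B ↔ LinearIndepOn F Aᵀ B ∧ ∀ x, Aᵀ x ∈ Submodule.span F (Aᵀ '' B) := by
  refine ⟨fun hB => ⟨(hM.2 B).1 hB.indep, fun x => ?_⟩, fun ⟨hB, hspan⟩ => ?_⟩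
  · by_contra hx
    have hxB : x ∉ B := fun h => hx (Submodule.subset_span (mem_image_of_mem _ h))
    refine (hB.insert_dep ⟨hM.1 ▸ mem_univ x, hxB⟩).not_indep ((hM.2 _).2 ?_)
    exact (linearIndepOn_insert hxB).2 ⟨(hM.2 B).1 hB.indep, hx⟩
  · exact ((hM.2 B).2 hB).isBase_of_forall_insert fun x hx hxB =>
      ((linearIndepOn_insert hx.2).1 ((hM.2 _).1 hxB)).2 (hspan x)

end IsVectorMatroid

lemma LinearIndepOn.insert_of_map_eq_zero {ι K V W : Type*} [DivisionRing K] [AddCommGroup V]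
    [Module K V] [AddCommGroup W] [Module K W] {v : ι → V} {s : Set ι} {x : ι} (f : V →ₗ[K] W)
    (hs : LinearIndepOn K (f ∘ v) s) (hfx : f (v x) = 0) (hx : v x ≠ 0) :
    LinearIndepOn K v (insert x s) := by
  have hxs : x ∉ s := fun h => hs.ne_zero h hfx
  refine (linearIndepOn_insert hxs).2 ⟨hs.of_comp f, fun hmem => hx ?_⟩
  exact Submodule.disjoint_def.1 (Submodule.range_ker_disjoint hs) _
    (by rwa [← image_eq_range]) hfx

lemma Submodule.comap_funLeft_inl_span_le {m n K : Type*} [Semiring K]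
    {L : Submodule K (m ⊕ n → K)} {s : Set (m → K)}
    (hinr : ∀ t : n → K, Sum.elim (0 : m → K) t ∈ L) (hinl : ∀ u ∈ s, Sum.elim u 0 ∈ L) :
    (span K s).comap (LinearMap.funLeft K K Sum.inl) ≤ L := by
  suffices hlift : ∀ u ∈ span K s, Sum.elim u 0 ∈ L by
    intro v hv
    have hsplit : v = Sum.elim (v ∘ Sum.inl) 0 + Sum.elim (0 : m → K) (v ∘ Sum.inr) := by
      ext (i | i) <;> simp
    rw [hsplit]
    exact L.add_mem (hlift _ hv) (hinr _)
  intro u hu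
  induction hu using Submodule.span_induction with
  | mem u hu => exact hinl u hu
  | zero => rw [Sum.elim_zero_zero]; exact L.zero_mem
  | add u w _ _ hu hw =>
    convert L.add_mem hu hw using 1
    ext (i | i) <;> simp
  | smul c u _ hu =>
    convert L.smul_mem c hu using 1
    ext (i | i) <;> simp

section EsMatrix

variable {m E F : Type*} [DecidableEq E] {A : Matrix m E F} {a b e : E} {α : F}

lemma splitMatrix_transpose_apply [Zero F] (x : E) :
    (splitMatrix A a b α)ᵀ x = Sum.elim (Aᵀ x) fun _ => if x = a ∨ x = b then α else 0 := by
  ext (i | i) <;> rfl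

lemma esMatrix_transpose_inl [Ring F] (x : E) :
    (esMatrix A a b e α)ᵀ (Sum.inl x) = (splitMatrix A a b α)ᵀ x :=
  rfl

lemma esMatrix_transpose_inr_zero [Ring F] : (esMatrix A a b e α)ᵀ (Sum.inr 0) = zColumn α :=
  rfl

lemma esMatrix_transpose_inr_one [Ring F] (he : e = a ∨ e = b) :
    (esMatrix A a b e α)ᵀ (Sum.inr 1) = Sum.elim (Aᵀ e) 0 := by
  ext (i | i) <;> simp [esMatrix, splitMatrix, zColumn, he]

lemma linearIndepOn_esMatrix [DivisionRing F] (he : e = a ∨ e = b) (hα : α ≠ 0) {I : Set E}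
    (heI : e ∉ I) (hJ : LinearIndepOn F Aᵀ (insert e I)) :
    LinearIndepOn F (esMatrix A a b e α)ᵀ (Sum.inl '' I ∪ {Sum.inr 0, Sum.inr 1}) := by
  set T : Set (E ⊕ Fin 2) := insert (Sum.inr 1) (Sum.inl '' I)
  set g : E ⊕ Fin 2 → E := Sum.elim id fun _ => e
  have hg : InjOn g T := by
    rintro (x | k) hx (y | l) hy hxy
    · exact congrArg Sum.inl hxy
    all_goals simp_all [T, g]
  have hgT : g '' T = insert e I := by simp [T, g, image_insert_eq, image_image]
  have hT : LinearIndepOn F (LinearMap.funLeft F F Sum.inl ∘ (esMatrix A a b e α)ᵀ) T := by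
    refine (linearIndepOn_congr ?_).2 ((hgT ▸ hJ).comp_of_image hg)
    rintro (x | k) hx
    · rfl
    · obtain rfl : k = 1 := by simpa [T] using hx
      change LinearMap.funLeft F F Sum.inl ((esMatrix A a b e α)ᵀ (Sum.inr 1)) = Aᵀ e
      rw [esMatrix_transpose_inr_one he]
      rfl
  rw [union_comm, insert_union, singleton_union]
  refine hT.insert_of_map_eq_zero _ rfl ?_
  rw [esMatrix_transpose_inr_zero]
  exact fun h => hα (congrFun h (Sum.inr ()))

lemma esMatrix_transpose_mem_span [DivisionRing F] (he : e = a ∨ e = b) (hα : α ≠ 0) {I : Set E}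
    (hspan : ∀ x, Aᵀ x ∈ Submodule.span F (Aᵀ '' insert e I)) (j : E ⊕ Fin 2) :
    (esMatrix A a b e α)ᵀ j ∈
      Submodule.span F ((esMatrix A a b e α)ᵀ '' (Sum.inl '' I ∪ {Sum.inr 0, Sum.inr 1})) := by
  set L := Submodule.span F ((esMatrix A a b e α)ᵀ '' (Sum.inl '' I ∪ {Sum.inr 0, Sum.inr 1}))
  have hcol : ∀ j ∈ Sum.inl '' I ∪ {Sum.inr 0, Sum.inr 1}, (esMatrix A a b e α)ᵀ j ∈ L :=
    fun j hj => Submodule.subset_span (mem_image_of_mem _ hj)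
  have hinr : ∀ t : Unit → F, Sum.elim (0 : m → F) t ∈ L := fun t => by
    have hz := hcol (Sum.inr 0) (by simp)
    rw [esMatrix_transpose_inr_zero] at hz
    convert L.smul_mem (t () / α) hz using 1
    ext (i | i) <;> simp [zColumn, hα]
  have hinl : ∀ u ∈ Aᵀ '' insert e I, Sum.elim u 0 ∈ L := by
    rintro _ ⟨y, rfl | hy, rfl⟩
    · have hγ := hcol (Sum.inr 1) (by simp)
      rwa [esMatrix_transpose_inr_one he] at hγ
    · have hy' := hcol (Sum.inl y) (by simp [hy])
      rw [esMatrix_transpose_inl, splitMatrix_transpose_apply] at hy'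
      convert L.sub_mem hy' (hinr fun _ => if y = a ∨ y = b then α else 0) using 1
      ext (i | i) <;> simp
  refine Submodule.comap_funLeft_inl_span_le hinr hinl ?_
  rcases j with x | k
  · exact hspan x
  · revert k
    refine Fin.forall_fin_two.2 ⟨?_, ?_⟩
    · rw [Submodule.mem_comap, esMatrix_transpose_inr_zero]
      exact zero_mem _
    · rw [Submodule.mem_comap, esMatrix_transpose_inr_one he]
      exact hspan e

end EsMatrix

theorem esSplitting_base_z_gamma (A : Matrix m E (ZMod p)) (a b e : E)
    (he : e = a ∨ e = b) (α : ZMod p) (hα : α ≠ 0)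
    (M : Matroid E) (hM : IsVectorMatroid M A)
    (M' : Matroid (E ⊕ Fin 2)) (hM' : IsVectorMatroid M' (esMatrix A a b e α))
    (I : Set E) (hI : M.Indep I) (hcard : I.ncard + 1 = rk M M.E)
    (hecl : e ∉ M.closure I) :
    M'.IsBase (Sum.inl '' I ∪ {Sum.inr 0, Sum.inr 1}) := by
  have heE : e ∈ M.E := hM.1 ▸ mem_univ e
  have heI : e ∉ I := M.notMem_of_mem_sdiff_closure ⟨heE, hecl⟩
  have hJ : M.IsBase (insert e I) := hI.isBase_insert_of_ncard_add_one_eq_rk heE hecl hcard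
  obtain ⟨hJindep, hJspan⟩ := hM.isBase_iff.1 hJ
  exact hM'.isBase_iff.2
    ⟨linearIndepOn_esMatrix he hα heI hJindep, esMatrix_transpose_mem_span he hα hJspan⟩
end

section
/- Let M be a p-matroid and C a circuit of M disjoint from {a,b}. Then C is also a circuit of the es-splitting matroid M^e_{a,b}. -/
open Matrix Set

variable {α : Type*}

variable {m E : Type*} [Fintype m] [Fintype E] [DecidableEq E] {p : ℕ} [Fact p.Prime]

/-! Off `{a, b}` the extra row of `A^e_{a,b}` vanishes, so on `C` the columns of `A^e_{a,b}` are
those of `A` extended by zero. Extension by zero is an injective linear map, hence every subset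
of `C` has the same independence status in both matrices, and circuits are determined by that. -/

theorem isCircuit_image_of_indep_image_iff {α β : Type*} {M : Matroid α}
    {N : Matroid β} {f : α → β} (hf : Function.Injective f) {C : Set α}
    (hCE : f '' C ⊆ N.E) (hindep : ∀ S ⊆ C, N.Indep (f '' S) ↔ M.Indep S)
    (hC : IsCircuit M C) : IsCircuit N (f '' C) := by
  refine ⟨⟨fun hind => hC.1.not_indep ((hindep C subset_rfl).mp hind), hCE⟩, ?_⟩
  intro D hD
  obtain ⟨S, hSC, rfl⟩ := subset_image_iff.mp hD.subset
  exact (hindep S hSC).mpr (hC.2 S ((hf.injOn.image_ssubset_image_iff hSC subset_rfl).mp hD))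

section Columns

variable {n κ F : Type*}

theorem colIndep_image_iff {ι : Type*} [Semiring F] (B : Matrix n ι F) {f : κ → ι}
    (hf : Function.Injective f) (S : Set κ) :
    ColIndep B (f '' S) ↔ ColIndep (B.submatrix id f) S := by
  rw [ColIndep, ← linearIndependent_equiv (Equiv.Set.image f S hf)]
  rfl

variable [DecidableEq κ]

theorem esMatrix_submatrix_inl [Ring F] (A : Matrix n κ F) (a b e : κ) (α : F) :
    (esMatrix A a b e α).submatrix id Sum.inl = splitMatrix A a b α :=
  rfl

theorem splitMatrix_transpose_of_ne [Semiring F] (A : Matrix n κ F) {a b x : κ} (α : F)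
    (hxa : x ≠ a) (hxb : x ≠ b) :
    (splitMatrix A a b α)ᵀ x = Function.ExtendByZero.linearMap F Sum.inl (Aᵀ x) := by
  ext (i | i)
  · simp [splitMatrix, Sum.inl_injective.extend_apply]
  · simp [splitMatrix, hxa, hxb, Function.extend_apply']

theorem colIndep_splitMatrix_iff [Semiring F] (A : Matrix n κ F) (a b : κ) (α : F)
    {S : Set κ} (hS : Disjoint S {a, b}) :
    ColIndep (splitMatrix A a b α) S ↔ ColIndep A S := by
  have hcol : (fun s : S => (splitMatrix A a b α)ᵀ s.1) =
      Function.ExtendByZero.linearMap F Sum.inl ∘ fun s : S => Aᵀ s.1 := by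
    funext s
    have hs : s.1 ∉ ({a, b} : Set κ) := hS.notMem_of_mem_left s.2
    simp only [mem_insert_iff, mem_singleton_iff, not_or] at hs
    exact splitMatrix_transpose_of_ne A α hs.1 hs.2
  rw [ColIndep, ColIndep, hcol]
  exact (Function.ExtendByZero.linearMap F Sum.inl).linearIndependent_iff_of_injOn
    (Function.extend_injective Sum.inl_injective (0 : n ⊕ Unit → F)).injOn

end Columns

theorem esSplitting_circuit_of_disjoint_general (A : Matrix m E (ZMod p)) (a b e : E)
    (α : ZMod p)
    (M : Matroid E) (hM : IsVectorMatroid M A)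
    (M' : Matroid (E ⊕ Fin 2)) (hM' : IsVectorMatroid M' (esMatrix A a b e α))
    (C : Set E) (hC : IsCircuit M C) (hd : Disjoint C {a, b}) :
    IsCircuit M' (Sum.inl '' C) := by
  refine isCircuit_image_of_indep_image_iff Sum.inl_injective
    (by simp [hM'.1]) (fun S hS => ?_) hC
  rw [hM'.2, hM.2, colIndep_image_iff _ Sum.inl_injective, esMatrix_submatrix_inl]
  exact colIndep_splitMatrix_iff A a b α (hd.mono_left hS)

theorem esSplitting_circuit_of_disjoint (A : Matrix m E (ZMod p)) (a b e : E)
    (he : e = a ∨ e = b) (α : ZMod p) (hα : α ≠ 0)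
    (M : Matroid E) (hM : IsVectorMatroid M A)
    (M' : Matroid (E ⊕ Fin 2)) (hM' : IsVectorMatroid M' (esMatrix A a b e α))
    (C : Set E) (hC : IsCircuit M C) (hd : Disjoint C {a, b}) :
    IsCircuit M' (Sum.inl '' C) :=
  esSplitting_circuit_of_disjoint_general A a b e α M hM M' hM' C hC hd
end
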